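/- arXiv:1504.05409 — 6 statements merged into one kernel-verified Lean document; each statement's English description precedes it below -/
import Mathlib

section
/- Let kappa > 0, let chi: positive integers -> C satisfy |chi(k)| <= kappa for all k, and define sigma(n) by sigma(0)=1 and n·sigma(n) = sum_{k=1}^{n} chi(k)·sigma(n-k). Then for all n >= 0, |sigma(n)| <= binomial(kappa + n - 1, n) = kappa(kappa+1)···(kappa+n-1)/n!. -/
/-!
Majorize `‖σ n‖` by the solution `B` of the recursion with every `χ k` replaced by `κ`, i.e.
`n B(n) = κ ∑_{m<n} B(m)`: strong induction and the triangle inequality give `‖σ n‖ ≤ B n`.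
This majorant recursion is solved by `B n = κ(κ+1)⋯(κ+n-1)/n!`, the coefficients of
`(1 - x)^(-κ)`, because these satisfy `(n+1) B(n+1) = (κ+n) B(n)`, which telescopes.
-/

open Finset

noncomputable def multichoose (κ : ℝ) (n : ℕ) : ℝ :=
  (∏ j ∈ range n, (κ + j)) / n.factorial

lemma multichoose_zero (κ : ℝ) : multichoose κ 0 = 1 := by
  simp [multichoose]

lemma succ_mul_multichoose_succ (κ : ℝ) (n : ℕ) :
    (n + 1 : ℝ) * multichoose κ (n + 1) = (κ + n) * multichoose κ n := by
  simp only [multichoose, prod_range_succ, Nat.factorial_succ, Nat.cast_mul, Nat.cast_add,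
    Nat.cast_one]
  field_simp

lemma mul_sum_range_multichoose (κ : ℝ) (n : ℕ) :
    κ * ∑ m ∈ range n, multichoose κ m = n * multichoose κ n := by
  induction n with
  | zero => simp
  | succ n ih =>
    rw [sum_range_succ, mul_add, ih, Nat.cast_succ, succ_mul_multichoose_succ]
    ring

lemma sum_Icc_one_sub_eq_sum_range {M : Type*} [AddCommMonoid M] (f : ℕ → M) (n : ℕ) :
    ∑ k ∈ Icc 1 n, f (n - k) = ∑ m ∈ range n, f m := by
  rw [← Ico_add_one_right_eq_Icc, sum_Ico_reflect f 1 le_rfl, Nat.sub_self, Nat.add_sub_cancel,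
    Nat.Ico_zero_eq_range]

lemma norm_le_of_convolution_recursion_majorant {𝕜 : Type*} [RCLike 𝕜] {κ : ℝ} {χ σ : ℕ → 𝕜} {B : ℕ → ℝ}
    (hχ : ∀ k : ℕ, 1 ≤ k → ‖χ k‖ ≤ κ)
    (hrec : ∀ n : ℕ, 1 ≤ n → (n : 𝕜) * σ n = ∑ k ∈ Icc 1 n, χ k * σ (n - k))
    (h0 : ‖σ 0‖ ≤ B 0) (hB : ∀ n : ℕ, 1 ≤ n → κ * ∑ m ∈ range n, B m ≤ n * B n) :
    ∀ n : ℕ, ‖σ n‖ ≤ B n := by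
  have hκ : 0 ≤ κ := (norm_nonneg _).trans (hχ 1 le_rfl)
  intro n
  induction n using Nat.strong_induction_on with
  | _ n ih =>
    rcases Nat.eq_zero_or_pos n with rfl | hn
    · exact h0
    have key : (n : ℝ) * ‖σ n‖ ≤ n * B n :=
      calc (n : ℝ) * ‖σ n‖ = ‖∑ k ∈ Icc 1 n, χ k * σ (n - k)‖ := by
            rw [← hrec n hn, norm_mul, RCLike.norm_natCast]
        _ ≤ ∑ k ∈ Icc 1 n, ‖χ k‖ * ‖σ (n - k)‖ := by
            simpa only [norm_mul] using norm_sum_le (Icc 1 n) fun k => χ k * σ (n - k)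
        _ ≤ ∑ k ∈ Icc 1 n, κ * B (n - k) := by
            refine sum_le_sum fun k hk => ?_
            obtain ⟨hk1, -⟩ := mem_Icc.mp hk
            exact mul_le_mul (hχ k hk1) (ih _ (Nat.sub_lt hn hk1)) (norm_nonneg _) hκ
        _ = κ * ∑ m ∈ range n, B m := by
            rw [← mul_sum, sum_Icc_one_sub_eq_sum_range B]
        _ ≤ n * B n := hB n hn
    exact le_of_mul_le_mul_left key (by exact_mod_cast hn)

theorem stmt_4_general (κ : ℝ) (χ : ℕ → ℂ)
    (hχ : ∀ k : ℕ, 1 ≤ k → ‖χ k‖ ≤ κ)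
    (σ : ℕ → ℂ) (hσ0 : σ 0 = 1)
    (hrec : ∀ n : ℕ, 1 ≤ n → (n : ℂ) * σ n = ∑ k ∈ Finset.Icc 1 n, χ k * σ (n - k)) :
    ∀ n : ℕ, ‖σ n‖ ≤ (∏ j ∈ Finset.range n, (κ + j)) / (n.factorial : ℝ) :=
  norm_le_of_convolution_recursion_majorant (B := multichoose κ) hχ hrec
    (by rw [hσ0, norm_one, multichoose_zero])
    (fun n _ => (mul_sum_range_multichoose κ n).le)

theorem stmt_4 (κ : ℝ) (hκ : 0 < κ) (χ : ℕ → ℂ)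
    (hχ : ∀ k : ℕ, 1 ≤ k → ‖χ k‖ ≤ κ)
    (σ : ℕ → ℂ) (hσ0 : σ 0 = 1)
    (hrec : ∀ n : ℕ, 1 ≤ n → (n : ℂ) * σ n = ∑ k ∈ Finset.Icc 1 n, χ k * σ (n - k)) :
    ∀ n : ℕ, ‖σ n‖ ≤ (∏ j ∈ Finset.range n, (κ + j)) / (n.factorial : ℝ) :=
  stmt_4_general κ χ hχ σ hσ0 hrec
end

section
/- Let m >= 1 and define sigma(n) by sigma(0)=1 and n·sigma(n) = sum_{k=1}^{min(n,m)} sigma(n-k) for n >= 1 (i.e., chi(k)=1 for 1<=k<=m and chi(k)=0 for k>m). Then sigma(n) >= rho(n/m) for all n >= 0, where rho is the Dickman function defined by rho(u)=1 for 0<=u<=1 and u·rho(u) = integral from 0 to 1 of rho(u-t) dt for u > 1. -/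
/-!
Both sides are averages of their own past: `n σ(n)` is the sum of the `m` previous values of `σ`,
and `u ρ(u)` is the integral of `ρ` over the window `[u - 1, u]`. For `u ≥ n / m` the window splits
into `m` pieces of length `1 / m`, on the `k`-th of which `ρ ≤ σ(n - (m - k))` by strong induction,
so `u ρ(u) ≤ (n / m) σ(n) ≤ u σ(n)`.

The base case needs `ρ ≤ 1` on `[0, ∞)`, which the integral equation gives through a bootstrap
on steps of length `1 / 2`: if `ρ ≤ 1` on `[0, a]` and `ρ ≤ M` on `(a, v]`, then the
integral equation gives `ρ ≤ (M + 1) / 2` on `(a, v]`, so the supremum of `ρ` there is at most `1`.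
-/

open MeasureTheory Set intervalIntegral

lemma forall_le_of_le_midpoint {α : Type*} {S : Set α} {f : α → ℝ} {c : ℝ}
    (hbdd : BddAbove (f '' S))
    (hhalf : ∀ M, c ≤ M → (∀ x ∈ S, f x ≤ M) → ∀ x ∈ S, f x ≤ (M + c) / 2) :
    ∀ x ∈ S, f x ≤ c := by
  rcases S.eq_empty_or_nonempty with rfl | hne
  · simp
  set M := max (sSup (f '' S)) c
  have hM : ∀ x ∈ S, f x ≤ M := fun x hx =>
    (le_csSup hbdd (mem_image_of_mem f hx)).trans (le_max_left _ _)
  have hsup : sSup (f '' S) ≤ (M + c) / 2 :=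
    csSup_le (hne.image f) (by rintro _ ⟨x, hx, rfl⟩; exact hhalf M (le_max_right _ _) hM x hx)
  have hMc : M ≤ c := by
    rcases max_cases (sSup (f '' S)) c with ⟨h, -⟩ | ⟨h, -⟩ <;> linarith
  exact fun x hx => (hM x hx).trans hMc

lemma IntervalIntegrable.of_subinterval {E : Type*} [NormedAddCommGroup E] {f : ℝ → E}
    {μ : Measure ℝ} {a b c d : ℝ} (hf : IntervalIntegrable f μ a b) (hac : a ≤ c) (hcd : c ≤ d)
    (hdb : d ≤ b) :
    IntervalIntegrable f μ c d :=
  hf.mono_set (uIcc_subset_uIcc (mem_uIcc_of_le hac (hcd.trans hdb))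
    (mem_uIcc_of_le (hac.trans hcd) hdb))

lemma integral_le_sum_of_le_on_pieces {f : ℝ → ℝ} {a h : ℝ} (hh : 0 ≤ h) {m : ℕ}
    (hf : IntervalIntegrable f volume a (a + m * h)) (g : ℕ → ℝ)
    (hfg : ∀ k < m, ∀ x ∈ Icc (a + k * h) (a + (k + 1) * h), f x ≤ g k) :
    ∫ x in a..a + m * h, f x ≤ h * ∑ k ∈ Finset.range m, g k := by
  have hpiece : ∀ k < m, IntervalIntegrable f volume (a + k * h) (a + (k + 1 : ℕ) * h) := by
    intro k hk
    have hkm : (k : ℝ) + 1 ≤ m := by exact_mod_cast hk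
    push_cast
    exact hf.of_subinterval (by nlinarith) (by nlinarith) (by nlinarith)
  have hsum := sum_integral_adjacent_intervals hpiece
  simp only [Nat.cast_zero, zero_mul, add_zero] at hsum
  rw [← hsum, Finset.mul_sum]
  refine Finset.sum_le_sum fun k hk => ?_
  have hk := Finset.mem_range.1 hk
  calc ∫ x in a + k * h..a + (k + 1 : ℕ) * h, f x
      ≤ ∫ _ in a + k * h..a + (k + 1 : ℕ) * h, g k :=
        integral_mono_on (by push_cast; nlinarith) (hpiece k hk) intervalIntegrable_const
          (fun x hx => hfg k hk x (by exact_mod_cast hx))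
    _ = h * g k := by simp only [intervalIntegral.integral_const, smul_eq_mul]; push_cast; ring

section Recurrence

variable {m : ℕ} {σ : ℕ → ℝ}

lemma sigma_nonneg (hσ0 : σ 0 = 1)
    (hrec : ∀ n : ℕ, 1 ≤ n → (n : ℝ) * σ n = ∑ k ∈ Finset.Icc 1 (min n m), σ (n - k)) (n : ℕ) :
    0 ≤ σ n := by
  induction n using Nat.strong_induction_on with
  | _ n ih =>
    rcases Nat.eq_zero_or_pos n with rfl | hn
    · simp [hσ0]
    · have hsum : 0 ≤ (n : ℝ) * σ n := hrec n hn ▸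
        Finset.sum_nonneg fun k hk => ih _ (by rw [Finset.mem_Icc] at hk; omega)
      exact nonneg_of_mul_nonneg_right hsum (by exact_mod_cast hn)

lemma sigma_eq_one_of_le (hσ0 : σ 0 = 1)
    (hrec : ∀ n : ℕ, 1 ≤ n → (n : ℝ) * σ n = ∑ k ∈ Finset.Icc 1 (min n m), σ (n - k)) {n : ℕ}
    (hnm : n ≤ m) : σ n = 1 := by
  induction n using Nat.strong_induction_on with
  | _ n ih =>
    rcases Nat.eq_zero_or_pos n with rfl | hn
    · exact hσ0
    · have hones : ∀ k ∈ Finset.Icc 1 n, σ (n - k) = 1 := fun k hk =>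
        ih _ (by rw [Finset.mem_Icc] at hk; omega) (by omega)
      have h := hrec n hn
      rw [min_eq_left hnm, Finset.sum_congr rfl hones] at h
      simp only [Finset.sum_const, Nat.card_Icc, add_tsub_cancel_right, nsmul_eq_mul,
        mul_one] at h
      exact (mul_eq_left₀ (by exact_mod_cast hn.ne')).1 h

lemma sum_range_eq_mul_of_lt
    (hrec : ∀ n : ℕ, 1 ≤ n → (n : ℝ) * σ n = ∑ k ∈ Finset.Icc 1 (min n m), σ (n - k)) {n : ℕ}
    (hmn : m < n) : ∑ k ∈ Finset.range m, σ (n - (m - k)) = n * σ n := by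
  rw [hrec n (by omega), min_eq_right hmn.le, ← Finset.sum_range_reflect]
  calc ∑ k ∈ Finset.range m, σ (n - (m - (m - 1 - k)))
      = ∑ k ∈ Finset.range m, σ (n - (k + 1)) :=
        Finset.sum_congr rfl fun k hk => by rw [Finset.mem_range] at hk; congr 2; omega
    _ = ∑ k ∈ Finset.Icc 1 m, σ (n - k) := by
        rw [Finset.range_eq_Ico, Finset.sum_Ico_add' (fun k => σ (n - k))]; rfl

end Recurrence

namespace Dickman

variable {ρ : ℝ → ℝ}

lemma mul_eq_integral_window
    (hρ : ∀ u : ℝ, 1 < u → u * ρ u = ∫ t in (0:ℝ)..1, ρ (u - t)) {u : ℝ} (hu : 1 < u) :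
    u * ρ u = ∫ x in u - 1..u, ρ x := by
  rw [hρ u hu, integral_comp_sub_left ρ u, sub_zero]

/-- The integral of a non-integrable function is `0`, so the equation forces `ρ u = 0` there. -/
lemma eq_zero_of_not_intervalIntegrable (hρ : ∀ u : ℝ, 1 < u → u * ρ u = ∫ x in u - 1..u, ρ x)
    {u : ℝ} (hu : 1 < u) (hw : ¬ IntervalIntegrable ρ volume (u - 1) u) : ρ u = 0 := by
  have hmul := hρ u hu
  rw [integral_undef hw] at hmul
  exact (mul_eq_zero.1 hmul).resolve_left (by linarith)

lemma le_one_on_Icc_add_half (hρ : ∀ u : ℝ, 1 < u → u * ρ u = ∫ x in u - 1..u, ρ x)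
    {a : ℝ} (ha : 1 ≤ a) (hle : ∀ v ∈ Icc 0 a, ρ v ≤ 1) :
    ∀ v ∈ Icc 0 (a + 1 / 2), ρ v ≤ 1 := by
  rintro v ⟨hv0, hva⟩
  rcases le_or_gt v a with hv | hv
  · exact hle v ⟨hv0, hv⟩
  by_cases hwv : IntervalIntegrable ρ volume (v - 1) v
  swap
  · rw [eq_zero_of_not_intervalIntegrable hρ (by linarith) hwv]; exact zero_le_one
  have hint : ∀ w ∈ Ioc a v, IntervalIntegrable ρ volume a w := fun w hw =>
    hwv.of_subinterval (by linarith) hw.1.le hw.2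
  have hbound : ∀ w ∈ Ioc a v, ∀ B, 0 ≤ B → a - (w - 1) + ∫ x in a..w, ρ x ≤ B → ρ w ≤ B := by
    rintro w ⟨haw, hwv'⟩ B hB hwB
    -- the window of `w` sticks out of `[v - 1, v]`, so its integrability is a separate case
    by_cases hw : IntervalIntegrable ρ volume (w - 1) w
    swap
    · rwa [eq_zero_of_not_intervalIntegrable hρ (by linarith) hw]
    have hpast : ∫ x in w - 1..a, ρ x ≤ a - (w - 1) := by
      simpa using integral_mono_on (by linarith) (hw.of_subinterval le_rfl (by linarith) haw.le)
        intervalIntegrable_const (fun x hx => hle x ⟨by linarith [hx.1], hx.2⟩)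
    refine le_of_mul_le_of_one_le ?_ hB (by linarith : 1 ≤ w)
    rw [mul_comm, hρ w (by linarith), ← integral_add_adjacent_intervals
      (hw.of_subinterval le_rfl (by linarith) haw.le)
      (hw.of_subinterval (by linarith) haw.le le_rfl)]
    linarith
  refine forall_le_of_le_midpoint (S := Ioc a v) ?_ ?_ v ⟨hv, le_rfl⟩
  · have hnonneg : 0 ≤ ∫ x in a..v, |ρ x| := integral_nonneg hv.le fun x _ => abs_nonneg _
    refine ⟨1 + ∫ x in a..v, |ρ x|, ?_⟩
    rintro _ ⟨w, hw, rfl⟩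
    refine hbound w hw _ (by linarith) ?_
    have hcur : ∫ x in a..w, ρ x ≤ ∫ x in a..v, |ρ x| :=
      (integral_mono_on hw.1.le (hint w hw) (hint w hw).abs fun x _ => le_abs_self _).trans
        (integral_mono_interval le_rfl hw.1.le hw.2 (ae_of_all _ fun x => abs_nonneg _)
          (hint v ⟨hv, le_rfl⟩).abs)
    linarith [hw.1]
  · intro M hM hρM w hw
    refine hbound w hw _ (by linarith) ?_
    have hcur : ∫ x in a..w, ρ x ≤ (w - a) * M := by
      simpa using integral_mono_on_of_le_Ioo hw.1.le (hint w hw) intervalIntegrable_const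
        (fun x hx => hρM x ⟨hx.1, hx.2.le.trans hw.2⟩)
    nlinarith [hw.1, hw.2]

lemma le_one_of_nonneg (hρ1 : ∀ u : ℝ, 0 ≤ u → u ≤ 1 → ρ u = 1)
    (hρ : ∀ u : ℝ, 1 < u → u * ρ u = ∫ x in u - 1..u, ρ x) {u : ℝ} (hu : 0 ≤ u) : ρ u ≤ 1 := by
  have hstep : ∀ n : ℕ, ∀ v ∈ Icc (0 : ℝ) (1 + n / 2), ρ v ≤ 1 := by
    intro n
    induction n with
    | zero => simpa using fun v hv0 hv1 => (hρ1 v hv0 hv1).le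
    | succ n ih =>
      have := le_one_on_Icc_add_half hρ (by linarith [(n.cast_nonneg : (0 : ℝ) ≤ n)]) ih
      push_cast
      rwa [add_div, ← add_assoc]
  obtain ⟨n, hn⟩ := exists_nat_ge (2 * u)
  exact hstep n u ⟨hu, by linarith⟩


lemma le_sigma_of_div_le {ρ : ℝ → ℝ} {σ : ℕ → ℝ} {m : ℕ} (hm : 1 ≤ m)
    (hρ : ∀ u : ℝ, 1 < u → u * ρ u = ∫ x in u - 1..u, ρ x) (hρle : ∀ u : ℝ, 0 ≤ u → ρ u ≤ 1)
    (hσ : ∀ n, 0 ≤ σ n) (hσ1 : ∀ n ≤ m, σ n = 1)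
    (hrec : ∀ n : ℕ, 1 ≤ n → (n : ℝ) * σ n = ∑ k ∈ Finset.Icc 1 (min n m), σ (n - k)) (n : ℕ) :
    ∀ u : ℝ, n / m ≤ u → ρ u ≤ σ n := by
  have hm0 : (0 : ℝ) < m := by exact_mod_cast hm
  induction n using Nat.strong_induction_on with
  | _ n ih =>
    intro u hu
    rcases le_or_gt n m with hnm | hmn
    · rw [hσ1 n hnm]
      exact hρle u (le_trans (by positivity) hu)
    have hu1 : 1 < u := lt_of_lt_of_le (by rw [one_lt_div hm0]; exact_mod_cast hmn) hu
    by_cases hw : IntervalIntegrable ρ volume (u - 1) u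
    swap
    · rw [eq_zero_of_not_intervalIntegrable hρ hu1 hw]
      exact hσ n
    have hpiece : ∀ k < m, ∀ x ∈ Icc (u - 1 + k * (1 / m)) (u - 1 + (k + 1) * (1 / m)),
        ρ x ≤ σ (n - (m - k)) := by
      intro k hk x hx
      refine ih _ (by omega) x ?_
      have hcast : ((n - (m - k) : ℕ) : ℝ) = n - m + k := by
        rw [Nat.cast_sub (by omega), Nat.cast_sub hk.le]; ring
      have hx1 : u - 1 + k / m ≤ x := by simpa only [mul_one_div] using hx.1
      rw [hcast, add_div, sub_div, div_self hm0.ne']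
      linarith
    have hwin : u - 1 + m * (1 / m) = u := by field_simp; ring
    have hsplit := integral_le_sum_of_le_on_pieces (by positivity) (by rwa [hwin]) _ hpiece
    rw [hwin, ← hρ u hu1, sum_range_eq_mul_of_lt hrec hmn] at hsplit
    have hmul : u * ρ u ≤ u * σ n :=
      calc u * ρ u ≤ n / m * σ n := hsplit.trans_eq (by ring)
        _ ≤ u * σ n := mul_le_mul_of_nonneg_right hu (hσ n)
    exact le_of_mul_le_mul_left hmul (by linarith)

end Dickman

theorem stmt_6 (m : ℕ) (hm : 1 ≤ m) (ρ : ℝ → ℝ)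
    (hρ1 : ∀ u : ℝ, 0 ≤ u → u ≤ 1 → ρ u = 1)
    (hρ2 : ∀ u : ℝ, 1 < u → u * ρ u = ∫ t in (0:ℝ)..1, ρ (u - t))
    (σ : ℕ → ℝ) (hσ0 : σ 0 = 1)
    (hrec : ∀ n : ℕ, 1 ≤ n →
      (n : ℝ) * σ n = ∑ k ∈ Finset.Icc 1 (min n m), σ (n - k)) :
    ∀ n : ℕ, ρ ((n : ℝ) / m) ≤ σ n := by
  have hρ : ∀ u : ℝ, 1 < u → u * ρ u = ∫ x in u - 1..u, ρ x := fun u hu =>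
    Dickman.mul_eq_integral_window hρ2 hu
  have hρle : ∀ u : ℝ, 0 ≤ u → ρ u ≤ 1 := fun u hu => Dickman.le_one_of_nonneg hρ1 hρ hu
  intro n
  exact Dickman.le_sigma_of_div_le hm hρ hρle (sigma_nonneg hσ0 hrec)
    (fun n hn => sigma_eq_one_of_le hσ0 hrec hn) hrec n _ le_rfl
end

section
/- (Triple convolution identity.) Let F(z) = sum_{n>=0} a_n z^n be holomorphic and nonvanishing on a disc of radius R > r > 0 with a_0 = 1, and write z·F'(z)/F(z) = sum_{n>=1} b_n z^n. Then for every n >= 1, n·a_n = b_n + (1/(2 pi i)) integral_0^1 integral_{|z|=r} (z F'(z)/F(z)) (t z F'(tz)/F(tz)) F(tz) dz/z^{n+1} dt/t. -/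
/-!
For `0 < t ≤ 1` the factors `t` and `F (t z)` cancel, leaving `z F'(z)/F(z) · z F'(t z)`.
By Fubini and the fundamental theorem of calculus along the segment `[0, z]`,
`∫₀¹ z F'(t z) dt = F z - 1`, so the double integral is
`∮ (z F'/F) (F - 1) z⁻ⁿ⁻¹ dz = ∮ z F' z⁻ⁿ⁻¹ dz - ∮ (z F'/F) z⁻ⁿ⁻¹ dz`.
By the Cauchy coefficient formula these are `2πi` times the `n`-th Taylor coefficients
`n aₙ` of `z F'` and `bₙ` of `z F'/F`.
-/

open Metric Complex Set FormalMultilinearSeries MeasureTheory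
open scoped Interval

section PowerSeries

variable {f : ℂ → ℂ} {c : ℕ → ℂ} {R : ℝ}

theorem hasFPowerSeriesOnBall_ofScalars_of_hasSum (hR : 0 < R)
    (hs : ∀ z ∈ ball (0 : ℂ) R, HasSum (fun k => c k * z ^ k) (f z)) :
    HasFPowerSeriesOnBall f (ofScalars ℂ c) 0 (.ofReal R) := by
  refine ⟨ENNReal.le_of_forall_nnreal_lt fun s hs' => ?_, by simpa using hR, fun {y} hy => ?_⟩
  · have hsR : (s : ℝ) < R := by
      rwa [← ENNReal.ofReal_coe_nnreal, ENNReal.ofReal_lt_ofReal_iff hR] at hs'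
    refine (ofScalars ℂ c).le_radius_of_tendsto (l := 0) ?_
    have hsum := hs (s : ℂ) (by simpa using hsR)
    simpa [ofScalars_norm, norm_mul, norm_pow] using hsum.summable.tendsto_atTop_zero.norm
  · rw [eball_ofReal] at hy
    simpa [mul_comm] using hs y hy

theorem HasFPowerSeriesOnBall.hasSum_mul_deriv {ρ : ENNReal}
    (hf : HasFPowerSeriesOnBall f (ofScalars ℂ c) 0 ρ) {z : ℂ} (hz : z ∈ eball 0 ρ) :
    HasSum (fun k : ℕ => k * c k * z ^ k) (z * deriv f z) := by
  have hsum := (hf.fderiv.hasSum hz).mapL (ContinuousLinearMap.apply ℂ ℂ z)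
  simp only [zero_add, ContinuousLinearMap.apply_apply, derivSeries_apply_diag,
    ofScalars_apply_eq] at hsum
  simpa using (hasSum_nat_add_iff (f := fun k : ℕ => (k : ℂ) * c k * z ^ k) 1).mp
    (by simpa [nsmul_eq_mul, mul_assoc] using hsum)

theorem circleIntegral_div_pow_succ_eq_coeff {r : ℝ} (hr : 0 < r) (hrR : r < R)
    (hs : ∀ z ∈ ball (0 : ℂ) R, HasSum (fun k => c k * z ^ k) (f z)) (k : ℕ) :
    (2 * Real.pi * I)⁻¹ * ∮ z in C(0, r), f z / z ^ (k + 1) = c k := by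
  have hf := hasFPowerSeriesOnBall_ofScalars_of_hasSum (hr.trans hrR) hs
  have hdiff : DifferentiableOn ℂ f (closedBall 0 r) :=
    hf.differentiableOn.mono (by rw [eball_ofReal]; exact closedBall_subset_ball hrR)
  have hcauchy := hdiff.circleIntegral_one_div_sub_center_pow_smul hr k
  have htaylor := hf.factorial_smul 1 k
  rw [← iteratedDeriv_eq_iteratedFDeriv, ofScalars_apply_eq] at htaylor
  rw [← htaylor] at hcauchy
  have hk : (k.factorial : ℂ) ≠ 0 := by exact_mod_cast k.factorial_ne_zero
  simp only [sub_zero, smul_eq_mul, one_div, one_pow, mul_one, nsmul_eq_mul] at hcauchy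
  simp_rw [div_eq_mul_inv, mul_comm (f _), hcauchy]
  field_simp

end PowerSeries

theorem intervalIntegral_circleIntegral_comm {E : Type*} [NormedAddCommGroup E]
    [NormedSpace ℂ E] [CompleteSpace E] {g : ℝ → ℂ → E} {a b r : ℝ} {c : ℂ} (hr : 0 ≤ r)
    (hg : ContinuousOn (Function.uncurry g) ([[a, b]] ×ˢ sphere c r)) :
    ∫ t in a..b, (∮ z in C(c, r), g t z) = ∮ z in C(c, r), ∫ t in a..b, g t z := by
  simp only [circleIntegral, deriv_circleMap, ← intervalIntegral.integral_smul]
  refine intervalIntegral_intervalIntegral_swap ?_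
  refine (ContinuousOn.integrableOn_compact (isCompact_uIcc.prod isCompact_uIcc) ?_).mono_set
    (prod_mono uIoc_subset_uIcc uIoc_subset_uIcc)
  refine (((continuous_circleMap 0 r).mul continuous_const).comp continuous_snd).continuousOn.smul
    (hg.comp (f := fun p : ℝ × ℝ => (p.1, circleMap c r p.2)) ?_
      fun p hp => ⟨hp.1, circleMap_mem_sphere c hr p.2⟩)
  exact (continuous_fst.prodMk ((continuous_circleMap c r).comp continuous_snd)).continuousOn

theorem ofReal_mul_mem_ball_zero {t : ℝ} (ht : t ∈ Icc 0 1) {z : ℂ} {R : ℝ}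
    (hz : z ∈ ball (0 : ℂ) R) : (t : ℂ) * z ∈ ball (0 : ℂ) R := by
  simpa [real_smul] using
    (convex_ball 0 R).smul_mem_of_zero_mem (mem_ball_self (pos_of_mem_ball hz)) hz ht

theorem continuousOn_div_pow_of_sphere {g : ℂ → ℂ} {r : ℝ} (hr : r ≠ 0)
    (hg : ContinuousOn g (sphere 0 r)) (k : ℕ) :
    ContinuousOn (fun z => g z / z ^ k) (sphere 0 r) :=
  hg.div (continuousOn_pow k) fun z hz => pow_ne_zero _ (ne_zero_of_mem_sphere hr ⟨z, hz⟩)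

section Segment

variable {F : ℂ → ℂ} {R : ℝ}

theorem integral_mul_deriv_ofReal_mul (hF : DifferentiableOn ℂ F (ball 0 R)) {z : ℂ}
    (hz : z ∈ ball (0 : ℂ) R) :
    ∫ t in (0 : ℝ)..1, z * deriv F (t * z) = F z - F 0 := by
  have hseg : ∀ t ∈ [[(0 : ℝ), 1]], (t : ℂ) * z ∈ ball (0 : ℂ) R := fun t ht =>
    ofReal_mul_mem_ball_zero (by rwa [uIcc_of_le zero_le_one] at ht) hz
  have hderiv : ∀ t ∈ [[(0 : ℝ), 1]],
      HasDerivAt (fun s : ℝ => F (s * z)) (z * deriv F (t * z)) t := fun t ht => by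
    have hFt := (hF.differentiableAt (isOpen_ball.mem_nhds (hseg t ht))).hasDerivAt
    simpa [mul_comm] using (hFt.comp (t : ℂ) (hasDerivAt_mul_const z)).comp_ofReal
  have hcont : ContinuousOn (fun t : ℝ => z * deriv F (t * z)) [[0, 1]] :=
    continuousOn_const.mul <| ((hF.deriv isOpen_ball).continuousOn).comp
      (continuous_ofReal.mul continuous_const).continuousOn hseg
  simpa using intervalIntegral.integral_eq_sub_of_hasDerivAt hderiv hcont.intervalIntegrable

theorem intervalIntegral_circleIntegral_mul_deriv_ofReal_mul {g : ℂ → ℂ} {r : ℝ} (hr : 0 ≤ r)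
    (hrR : r < R) (hF : DifferentiableOn ℂ F (ball 0 R)) (hg : ContinuousOn g (sphere 0 r)) :
    ∫ t in (0 : ℝ)..1, (∮ z in C(0, r), g z * (z * deriv F (t * z)))
      = ∮ z in C(0, r), g z * (F z - F 0) := by
  have hsphere : sphere (0 : ℂ) r ⊆ ball 0 R :=
    sphere_subset_closedBall.trans (closedBall_subset_ball hrR)
  have hcont : ContinuousOn (Function.uncurry fun (t : ℝ) z => g z * (z * deriv F (t * z)))
      ([[0, 1]] ×ˢ sphere 0 r) :=
    (hg.comp continuousOn_snd fun p hp => hp.2).mul <| continuousOn_snd.mul <|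
      (hF.deriv isOpen_ball).continuousOn.comp
        ((continuous_ofReal.comp continuous_fst).mul continuous_snd).continuousOn
        fun p hp => ofReal_mul_mem_ball_zero (by simpa [uIcc_of_le zero_le_one] using hp.1)
          (hsphere hp.2)
  rw [intervalIntegral_circleIntegral_comm hr hcont]
  refine circleIntegral.integral_congr hr fun z hz => ?_
  rw [intervalIntegral.integral_const_mul, integral_mul_deriv_ofReal_mul hF (hsphere hz)]

end Segment

section LogDeriv

variable {F : ℂ → ℂ} {a b : ℕ → ℂ} {R r : ℝ}

theorem circleIntegral_logDeriv_mul_sub_one (hr : 0 < r) (hrR : r < R)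
    (hF : DifferentiableOn ℂ F (ball 0 R)) (hnz : ∀ z ∈ ball (0 : ℂ) R, F z ≠ 0)
    (ha : ∀ z ∈ ball (0 : ℂ) R, HasSum (fun k => a k * z ^ k) (F z))
    (hb : ∀ z ∈ ball (0 : ℂ) R, HasSum (fun k => b k * z ^ k) (z * deriv F z / F z)) (n : ℕ) :
    (2 * Real.pi * I)⁻¹ * ∮ z in C(0, r), z * deriv F z / F z / z ^ (n + 1) * (F z - 1)
      = n * a n - b n := by
  have hsphere : sphere (0 : ℂ) r ⊆ ball 0 R :=
    sphere_subset_closedBall.trans (closedBall_subset_ball hrR)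
  have hzF' : DifferentiableOn ℂ (fun z => z * deriv F z) (ball 0 R) :=
    differentiableOn_id.mul (hF.deriv isOpen_ball)
  have hzF'_series : ∀ z ∈ ball (0 : ℂ) R, HasSum (fun k => k * a k * z ^ k) (z * deriv F z) :=
    fun z hz => (hasFPowerSeriesOnBall_ofScalars_of_hasSum (hr.trans hrR) ha).hasSum_mul_deriv
      (by rwa [eball_ofReal])
  have hsplit : (∮ z in C(0, r), z * deriv F z / F z / z ^ (n + 1) * (F z - 1))
      = ∮ z in C(0, r), (z * deriv F z / z ^ (n + 1) - z * deriv F z / F z / z ^ (n + 1)) :=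
    circleIntegral.integral_congr hr.le fun z hz => by
      have hFz := hnz z (hsphere hz)
      field_simp
  rw [hsplit, circleIntegral.integral_sub, mul_sub,
    circleIntegral_div_pow_succ_eq_coeff hr hrR hzF'_series n,
    circleIntegral_div_pow_succ_eq_coeff hr hrR hb n]
  all_goals refine (continuousOn_div_pow_of_sphere hr.ne' ?_ _).circleIntegrable hr.le
  exacts [hzF'.continuousOn.mono hsphere, (hzF'.div hF hnz).continuousOn.mono hsphere]

end LogDeriv

theorem stmt_8_general (R r : ℝ) (hr : 0 < r) (hrR : r < R)
    (F : ℂ → ℂ) (hol : DifferentiableOn ℂ F (Metric.ball 0 R))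
    (hnz : ∀ z ∈ Metric.ball (0:ℂ) R, F z ≠ 0) (hF0 : F 0 = 1)
    (a b : ℕ → ℂ)
    (ha : ∀ z ∈ Metric.ball (0:ℂ) R, HasSum (fun n => a n * z ^ n) (F z))
    (hb : ∀ z ∈ Metric.ball (0:ℂ) R, HasSum (fun n => b n * z ^ n) (z * deriv F z / F z))
    (n : ℕ) :
    (n : ℂ) * a n = b n + (2 * Real.pi * Complex.I)⁻¹ *
      ∫ t in (0:ℝ)..1, (∮ z in C(0, r),
        (z * deriv F z / F z) *
          ((t : ℂ) * z * deriv F ((t : ℂ) * z) / F ((t : ℂ) * z)) * F ((t : ℂ) * z)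
          / z ^ (n + 1)) / (t : ℂ) := by
  have hsphere : sphere (0 : ℂ) r ⊆ ball 0 R :=
    sphere_subset_closedBall.trans (closedBall_subset_ball hrR)
  have hL : ContinuousOn (fun z => z * deriv F z / F z) (sphere 0 r) :=
    ((differentiableOn_id.mul (hol.deriv isOpen_ball)).div hol hnz).continuousOn.mono hsphere
  rw [intervalIntegral.integral_congr_ae (g := fun t : ℝ => ∮ z in C(0, r),
      z * deriv F z / F z / z ^ (n + 1) * (z * deriv F (t * z))) ?cancel,
    intervalIntegral_circleIntegral_mul_deriv_ofReal_mul hr.le hrR hol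
      (continuousOn_div_pow_of_sphere hr.ne' hL (n + 1)),
    hF0, circleIntegral_logDeriv_mul_sub_one hr hrR hol hnz ha hb n]
  · ring
  case cancel =>
    refine ae_of_all _ fun t ht => ?_
    rw [uIoc_of_le zero_le_one] at ht
    have ht0 : (t : ℂ) ≠ 0 := ofReal_ne_zero.mpr ht.1.ne'
    rw [div_eq_mul_inv, mul_comm, ← circleIntegral.integral_const_mul]
    refine circleIntegral.integral_congr hr.le fun z hz => ?_
    have hFtz := hnz _ (ofReal_mul_mem_ball_zero (Ioc_subset_Icc_self ht) (hsphere hz))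
    field_simp

theorem stmt_8 (R r : ℝ) (hr : 0 < r) (hrR : r < R)
    (F : ℂ → ℂ) (hol : DifferentiableOn ℂ F (Metric.ball 0 R))
    (hnz : ∀ z ∈ Metric.ball (0:ℂ) R, F z ≠ 0) (hF0 : F 0 = 1)
    (a b : ℕ → ℂ) (ha0 : a 0 = 1) (hb0 : b 0 = 0)
    (ha : ∀ z ∈ Metric.ball (0:ℂ) R, HasSum (fun n => a n * z ^ n) (F z))
    (hb : ∀ z ∈ Metric.ball (0:ℂ) R, HasSum (fun n => b n * z ^ n) (z * deriv F z / F z))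
    (n : ℕ) (hn : 1 ≤ n) :
    (n : ℂ) * a n = b n + (2 * Real.pi * Complex.I)⁻¹ *
      ∫ t in (0:ℝ)..1, (∮ z in C(0, r),
        (z * deriv F z / F z) *
          ((t : ℂ) * z * deriv F ((t : ℂ) * z) / F ((t : ℂ) * z)) * F ((t : ℂ) * z)
          / z ^ (n + 1)) / (t : ℂ) :=
  stmt_8_general R r hr hrR F hol hnz hF0 a b ha hb n
end

section
/- Suppose |chi(k)| <= kappa for all k >= 1 and let sigma(n) be defined by sigma(0)=1 and n·sigma(n) = sum_{k=1}^n chi(k) sigma(n-k). If sigma(n) = 0 for all n >= K+1 for some K >= 0, then the polynomial F(z) = sum_{n=0}^{K} sigma(n) z^n factors as prod_{j=1}^{K'} (1 - alpha_j z) with all |alpha_j| <= 1 (K' <= K), and at most floor(kappa) of the alpha_j satisfy |alpha_j| = 1. -/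
/-!
Over ℂ the polynomial `F = ∑ σ(n) zⁿ` factors as `∏ (1 - α_j z)`. The recurrence says
`z F' = F · ∑_{k ≥ 1} χ(k) zᵏ`, and comparing with the logarithmic derivative of the product gives
Newton's identity `χ(l) = -∑_j α_jˡ`, so every power sum `∑_j α_jˡ` has modulus at most `κ`.

If `ρ` is the largest `|α_j|`, the numbers `α_j / ρ` of modulus one are points of a compact torus,
so their `l`-th powers are simultaneously close to `1` for infinitely many `l`, while the other
terms are `o(ρˡ)`. Hence `|∑_j α_jˡ| ≳ #{j | |α_j| = ρ} · ρˡ` infinitely often: this forces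
`ρ ≤ 1`, and for `ρ = 1` it shows that at most `κ` of the `α_j` lie on the unit circle.
-/

open Filter Topology Finset

namespace Polynomial

theorem exists_eq_prod_one_sub_C_mul_X {k : Type*} [Field k] [IsAlgClosed k] (n : ℕ)
    {p : k[X]} (hdeg : p.natDegree = n) (h0 : p.coeff 0 = 1) :
    ∃ α : Fin n → k, p = ∏ j, (1 - C (α j) * X) := by
  induction n generalizing p with
  | zero => exact ⟨Fin.elim0, by rw [eq_C_of_natDegree_eq_zero hdeg, h0]; simp⟩
  | succ n ih =>
    obtain ⟨r, hr⟩ := IsAlgClosed.exists_root p fun h => by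
      simp [natDegree_eq_of_degree_eq_some h] at hdeg
    have hr0 : r ≠ 0 := by
      rintro rfl
      simp [IsRoot, ← coeff_zero_eq_eval_zero, h0] at hr
    set q := C (-r) * (p /ₘ (X - C r))
    have hpq : p = (1 - C r⁻¹ * X) * q := by
      conv_lhs => rw [← mul_divByMonic_eq_iff_isRoot.2 hr]
      rw [← mul_assoc]
      congr 1
      have h : C r⁻¹ * C r = 1 := by rw [← C_mul, inv_mul_cancel₀ hr0, C_1]
      rw [C_neg]
      linear_combination (-X) * h
    have hq0 : q.coeff 0 = 1 := by simpa [hpq, mul_coeff_zero] using h0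
    have hqdeg : q.natDegree = n := by
      rw [natDegree_C_mul (neg_ne_zero.2 hr0), natDegree_divByMonic _ (monic_X_sub_C r), hdeg,
        natDegree_X_sub_C, Nat.add_sub_cancel]
    obtain ⟨α, hα⟩ := ih hqdeg hq0
    exact ⟨Fin.cons r⁻¹ α, by rw [Fin.prod_univ_succ, hpq, hα]; simp⟩

end Polynomial

theorem Derivation.map_prod_of_map_eq_mul {R A ι : Type*} [CommSemiring R] [CommSemiring A]
    [Algebra R A] (D : Derivation R A A) (s : Finset ι) {f g : ι → A}
    (h : ∀ i ∈ s, D (f i) = f i * g i) : D (∏ i ∈ s, f i) = (∏ i ∈ s, f i) * ∑ i ∈ s, g i := by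
  classical
  induction s using Finset.induction_on with
  | empty => simp
  | insert i s hi ih =>
    rw [prod_insert hi, sum_insert hi, D.leibniz, smul_eq_mul, smul_eq_mul,
      ih fun j hj => h j (mem_insert_of_mem hj), h i (mem_insert_self i s)]
    ring

namespace PowerSeries

variable {R : Type*} [CommRing R]

theorem mk_pow_mul_one_sub_C_mul_X (a : R) : (mk fun n => a ^ n) * (1 - C a * X) = 1 := by
  simpa [rescale_mk] using congrArg (rescale a) (mk_one_mul_one_sub_eq_one R)

theorem X_mul_derivative_one_sub_C_mul_X (a : R) :
    X * d⁄dX R (1 - C a * X) = (1 - C a * X) * -(C a * X * mk fun n => a ^ n) := by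
  rw [mul_neg, mul_comm (C a * X), ← mul_assoc, mul_comm _ (mk _), mk_pow_mul_one_sub_C_mul_X]
  simp [mul_comm]

theorem X_mul_derivative_mk_of_recurrence (σ χ : ℕ → R)
    (hrec : ∀ n : ℕ, 1 ≤ n → (n : R) * σ n = ∑ k ∈ Icc 1 n, χ k * σ (n - k)) :
    X * d⁄dX R (mk σ) = mk σ * (X * mk fun k => χ (k + 1)) := by
  ext n
  rcases n with _ | m
  · simp
  have hsum := hrec (m + 1) m.succ_pos
  rw [← Finset.Ico_add_one_right_eq_Icc, sum_Ico_eq_sum_range, Nat.add_sub_cancel] at hsum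
  rw [mul_comm (mk σ), mul_assoc, coeff_succ_X_mul, coeff_succ_X_mul, coeff_derivative, coeff_mk,
    coeff_mul, Finset.Nat.sum_antidiagonal_eq_sum_range_succ (fun i j => coeff i _ * coeff j _)]
  simp only [coeff_mk]
  push_cast at hsum
  rw [mul_comm, hsum]
  refine sum_congr rfl fun k _ => ?_
  rw [add_comm 1 k, Nat.add_sub_add_right]

theorem eq_neg_sum_pow_of_recurrence {ι : Type*} [Fintype ι] (α : ι → R) (σ χ : ℕ → R)
    (hσ : mk σ = ∏ j, (1 - C (α j) * X))
    (hrec : ∀ n : ℕ, 1 ≤ n → (n : R) * σ n = ∑ k ∈ Icc 1 n, χ k * σ (n - k))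
    (l : ℕ) (hl : 1 ≤ l) : χ l = -∑ j, α j ^ l := by
  have hunit : IsUnit (mk σ) := isUnit_iff_constantCoeff.2 (by simp [hσ, map_prod])
  have hlog : mk σ * (X * mk fun k => χ (k + 1)) =
      mk σ * ∑ j, -(C (α j) * X * mk fun n => α j ^ n) := by
    rw [← X_mul_derivative_mk_of_recurrence σ χ hrec, hσ, ← smul_eq_mul (a := X),
      ← Derivation.smul_apply]
    exact (X • d⁄dX R).map_prod_of_map_eq_mul univ fun j _ => X_mul_derivative_one_sub_C_mul_X _
  obtain ⟨m, rfl⟩ := Nat.exists_eq_add_of_le' hl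
  simpa [coeff_succ_X_mul, mul_comm X, mul_assoc, pow_succ'] using
    congrArg (coeff (m + 1)) (hunit.mul_left_cancel hlog)

end PowerSeries

theorem frequently_pow_mem_nhds_one {G : Type*} [Group G] [TopologicalSpace G]
    [IsTopologicalGroup G] [CompactSpace G] (g : G) {U : Set G} (hU : U ∈ 𝓝 1) :
    ∃ᶠ n in atTop, g ^ n ∈ U := by
  obtain ⟨x, -, hx⟩ := isCompact_univ.exists_mapClusterPt (f := atTop) (u := (g ^ · : ℕ → G))
    (by simp)
  have hdiv : Tendsto (fun p : G × G => p.1⁻¹ * p.2) (𝓝 x ×ˢ 𝓝 x) (𝓝 1) := by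
    rw [← nhds_prod_eq, ← inv_mul_cancel x]
    exact (continuous_fst.inv.mul continuous_snd).tendsto (x, x)
  -- two visits of the orbit to a small neighbourhood `V` of a cluster point `x`
  -- differ by a power lying in `U`
  obtain ⟨V, hV, hVU⟩ := mem_prod_self_iff.1 (hdiv hU)
  have hfreq := frequently_atTop.1 (hx.frequently hV)
  refine frequently_atTop.2 fun N => ?_
  obtain ⟨a, -, ha⟩ := hfreq 0
  obtain ⟨b, hab, hb⟩ := hfreq (a + N)
  obtain ⟨d, rfl⟩ := Nat.exists_eq_add_of_le hab
  refine ⟨N + d, le_self_add, ?_⟩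
  simpa [add_assoc, pow_add] using hVU (Set.mk_mem_prod ha hb)

theorem frequently_pow_mem_nhds_one_of_norm_eq_one {ι : Type*} (β : ι → ℂ)
    (hβ : ∀ j, ‖β j‖ = 1) {U : Set (ι → ℂ)} (hU : U ∈ 𝓝 1) : ∃ᶠ n in atTop, β ^ n ∈ U := by
  let b : ι → Circle := fun j => ⟨β j, mem_sphere_zero_iff_norm.2 (hβ j)⟩
  have hcont : Continuous fun (v : ι → Circle) j => (v j : ℂ) := by fun_prop
  have hU' : (fun (v : ι → Circle) j => (v j : ℂ)) ⁻¹' U ∈ 𝓝 1 :=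
    hcont.continuousAt.preimage_mem_nhds (by rwa [show (fun j => ((1 : ι → Circle) j : ℂ)) = 1 from
      funext fun _ => Circle.coe_one])
  refine (frequently_pow_mem_nhds_one b hU').mono fun n hn => ?_
  rwa [show β ^ n = fun j => ((b ^ n) j : ℂ) from funext fun j => by
    rw [Pi.pow_apply, Pi.pow_apply, Circle.coe_pow]]

theorem frequently_card_sub_lt_norm_sum_pow {ι : Type*} [Fintype ι] (α : ι → ℂ)
    (hα : ∀ j, ‖α j‖ ≤ 1) {ε : ℝ} (hε : 0 < ε) :
    ∃ᶠ l in atTop, (#{j | ‖α j‖ = 1} : ℝ) - ε < ‖∑ j, α j ^ l‖ := by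
  classical
  set T : Finset ι := {j | ‖α j‖ = 1}
  have hsmall : ∀ᶠ l in atTop, ‖∑ j ∈ Tᶜ, α j ^ l‖ < ε / 2 := by
    have hlim : Tendsto (fun l => ∑ j ∈ Tᶜ, α j ^ l) atTop (𝓝 0) := by
      simpa using tendsto_finsetSum Tᶜ fun j hj => tendsto_pow_atTop_nhds_zero_of_norm_lt_one
        ((hα j).lt_of_ne (by simpa [T] using hj))
    simpa using hlim.norm.eventually (gt_mem_nhds (by simpa using half_pos hε))
  have hnear : ∃ᶠ l in atTop, ‖∑ j ∈ T, α j ^ l - #T‖ < ε / 2 := by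
    have hU : {v : ι → ℂ | ‖∑ j ∈ T, v j - #T‖ < ε / 2} ∈ 𝓝 1 :=
      (isOpen_lt (by fun_prop) continuous_const).mem_nhds (by simpa using half_pos hε)
    let β : ι → ℂ := fun j => if ‖α j‖ = 1 then α j else 1
    refine (frequently_pow_mem_nhds_one_of_norm_eq_one β (fun j => ?_) hU).mono fun l hl => ?_
    · by_cases hj : ‖α j‖ = 1 <;> simp [β, hj]
    · have hβα : ∑ j ∈ T, β j ^ l = ∑ j ∈ T, α j ^ l :=
        sum_congr rfl fun j hj => by simp_all [β, T]
      simp only [Set.mem_ofPred_eq, Pi.pow_apply] at hl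
      rwa [hβα] at hl
  refine (hnear.and_eventually hsmall).mono fun l ⟨hT, hTc⟩ => ?_
  have hsplit : (#T : ℂ) = ∑ j, α j ^ l - (∑ j ∈ T, α j ^ l - #T) - ∑ j ∈ Tᶜ, α j ^ l := by
    rw [← sum_add_sum_compl T]
    ring
  have hle : (#T : ℝ) ≤ ‖∑ j, α j ^ l‖ + ‖∑ j ∈ T, α j ^ l - #T‖ + ‖∑ j ∈ Tᶜ, α j ^ l‖ :=
    calc (#T : ℝ) = ‖∑ j, α j ^ l - (∑ j ∈ T, α j ^ l - #T) - ∑ j ∈ Tᶜ, α j ^ l‖ := by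
          rw [← hsplit, Complex.norm_natCast]
      _ ≤ _ := (norm_sub_le _ _).trans (add_le_add_left (norm_sub_le _ _) _)
  linarith

theorem frequently_card_sub_mul_pow_lt_norm_sum_pow {ι : Type*} [Fintype ι] (α : ι → ℂ)
    {ρ : ℝ} (hρ : 0 < ρ) (hα : ∀ j, ‖α j‖ ≤ ρ) {ε : ℝ} (hε : 0 < ε) :
    ∃ᶠ l in atTop, ((#{j | ‖α j‖ = ρ} : ℝ) - ε) * ρ ^ l < ‖∑ j, α j ^ l‖ := by
  have hnorm : ∀ j, ‖α j / ρ‖ = ‖α j‖ / ρ := fun j => by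
    rw [norm_div, Complex.norm_real, Real.norm_of_nonneg hρ.le]
  have hα' : ∀ j, ‖α j / ρ‖ ≤ 1 := fun j => by rw [hnorm, div_le_one hρ]; exact hα j
  refine (frequently_card_sub_lt_norm_sum_pow _ hα' hε).mono fun l hl => ?_
  have hsum : ‖∑ j, (α j / ρ) ^ l‖ = ‖∑ j, α j ^ l‖ / ρ ^ l := by
    simp only [div_pow, ← sum_div, norm_div, norm_pow, Complex.norm_real,
      Real.norm_of_nonneg hρ.le]
  simp only [hnorm, div_eq_one_iff_eq hρ.ne'] at hl
  rwa [hsum, lt_div_iff₀ (pow_pos hρ l)] at hl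

theorem norm_le_one_of_norm_sum_pow_le {ι : Type*} [Fintype ι] (α : ι → ℂ) {κ : ℝ}
    (h : ∀ l, 1 ≤ l → ‖∑ j, α j ^ l‖ ≤ κ) (j : ι) : ‖α j‖ ≤ 1 := by
  by_contra! hj
  have : Nonempty ι := ⟨j⟩
  obtain ⟨j₀, hj₀⟩ := Finite.exists_max fun i => ‖α i‖
  set ρ := ‖α j₀‖
  have hρ : 1 < ρ := hj.trans_le (hj₀ j)
  have hcard : (1 : ℝ) ≤ #{i | ‖α i‖ = ρ} := by
    exact_mod_cast card_pos.2 ⟨j₀, by simp [ρ]⟩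
  have hlarge : ∀ᶠ l in atTop, 2 * κ < ρ ^ l ∧ 1 ≤ l :=
    ((tendsto_pow_atTop_atTop_of_one_lt hρ).eventually_gt_atTop _).and (eventually_ge_atTop 1)
  obtain ⟨l, hl, hκl, hl1⟩ := ((frequently_card_sub_mul_pow_lt_norm_sum_pow α (by linarith) hj₀
    (by norm_num : (0 : ℝ) < 1 / 2)).and_eventually hlarge).exists
  nlinarith [h l hl1, pow_pos (zero_lt_one.trans hρ) l]

theorem card_norm_eq_one_le_floor {ι : Type*} [Fintype ι] (α : ι → ℂ) {κ : ℝ}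
    (hα : ∀ j, ‖α j‖ ≤ 1) (h : ∀ l, 1 ≤ l → ‖∑ j, α j ^ l‖ ≤ κ) :
    #{j | ‖α j‖ = 1} ≤ ⌊κ⌋₊ := by
  refine Nat.le_floor (le_of_forall_pos_lt_add fun ε hε => ?_)
  obtain ⟨l, hl, hl1⟩ :=
    ((frequently_card_sub_lt_norm_sum_pow α hα hε).and_eventually (eventually_ge_atTop 1)).exists
  linarith [h l hl1]

open Polynomial

theorem stmt_12_general (κ : ℝ) (χ : ℕ → ℂ)
    (hχ : ∀ k : ℕ, 1 ≤ k → ‖χ k‖ ≤ κ)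
    (σ : ℕ → ℂ) (hσ0 : σ 0 = 1)
    (hrec : ∀ n : ℕ, 1 ≤ n → (n : ℂ) * σ n = ∑ k ∈ Finset.Icc 1 n, χ k * σ (n - k))
    (K : ℕ) (hvan : ∀ n : ℕ, K + 1 ≤ n → σ n = 0) :
    ∃ (K' : ℕ) (α : Fin K' → ℂ), K' ≤ K ∧ (∀ j, ‖α j‖ ≤ 1) ∧
      (∀ z : ℂ, ∑ i ∈ Finset.range (K + 1), σ i * z ^ i = ∏ j, (1 - α j * z)) ∧
      (Finset.univ.filter fun j => ‖α j‖ = 1).card ≤ ⌊κ⌋₊ := by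
  set F : ℂ[X] := ∑ i ∈ range (K + 1), C (σ i) * X ^ i
  have hcoeff : ∀ n, F.coeff n = σ n := fun n => by
    simp only [F, finsetSum_coeff, coeff_C_mul_X_pow, sum_ite_eq, mem_range]
    split_ifs with hn
    · rfl
    · exact (hvan n (by omega)).symm
  obtain ⟨K', hK'⟩ : ∃ K', F.natDegree = K' := ⟨_, rfl⟩
  obtain ⟨α, hα⟩ := exists_eq_prod_one_sub_C_mul_X K' hK' ((hcoeff 0).trans hσ0)
  have hσ : PowerSeries.mk σ = ∏ j, (1 - PowerSeries.C (α j) * PowerSeries.X) := by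
    have hcoe := map_prod (coeToPowerSeries.ringHom (R := ℂ)) (fun j => 1 - C (α j) * X) univ
    simp only [coeToPowerSeries.ringHom_apply, Polynomial.coe_sub, Polynomial.coe_one,
      Polynomial.coe_mul, coe_C, coe_X] at hcoe
    ext n
    rw [PowerSeries.coeff_mk, ← hcoeff, hα, ← coeff_coe, hcoe]
  have hpow : ∀ l, 1 ≤ l → ‖∑ j, α j ^ l‖ ≤ κ := fun l hl => by
    simpa [PowerSeries.eq_neg_sum_pow_of_recurrence α σ χ hσ hrec l hl] using hχ l hl
  have hα1 := norm_le_one_of_norm_sum_pow_le α hpow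
  refine ⟨K', α, hK' ▸ natDegree_le_iff_coeff_eq_zero.2 fun n hn => ?_, hα1, fun z => ?_,
    card_norm_eq_one_le_floor α hα1 hpow⟩
  · rw [hcoeff]
    exact hvan n (by exact_mod_cast hn)
  · simpa [F, eval_finsetSum, eval_prod] using congrArg (eval z) hα

theorem stmt_12 (κ : ℝ) (hκ : 0 < κ) (χ : ℕ → ℂ)
    (hχ : ∀ k : ℕ, 1 ≤ k → ‖χ k‖ ≤ κ)
    (σ : ℕ → ℂ) (hσ0 : σ 0 = 1)
    (hrec : ∀ n : ℕ, 1 ≤ n → (n : ℂ) * σ n = ∑ k ∈ Finset.Icc 1 n, χ k * σ (n - k))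
    (K : ℕ) (hvan : ∀ n : ℕ, K + 1 ≤ n → σ n = 0) :
    ∃ (K' : ℕ) (α : Fin K' → ℂ), K' ≤ K ∧ (∀ j, ‖α j‖ ≤ 1) ∧
      (∀ z : ℂ, ∑ i ∈ Finset.range (K + 1), σ i * z ^ i = ∏ j, (1 - α j * z)) ∧
      (Finset.univ.filter fun j => ‖α j‖ = 1).card ≤ ⌊κ⌋₊ :=
  stmt_12_general κ χ hχ σ hσ0 hrec K hvan
end

section
/- If kappa = 1 in the previous setting (|chi(k)| <= 1 for all k and sigma(n) = 0 for all n >= K+1), and some inverse root satisfies |alpha_j| = 1, then K' = 1 and F(z) = 1 - e(theta) z for some real theta; equivalently chi(k) = -e(k theta) for all k >= 1. -/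
/-!
Normalise a root of modulus one to `1`, i.e. consider `zⱼ = αⱼ / αⱼ₀`. Recurrence in the compact
torus of the directions of the `zⱼ` gives an exponent `l ≥ 1` for which every nonzero `zⱼ ^ l` has
positive real part. Then `1 + ∑_{j ≠ j₀} Re (zⱼ ^ l) = Re (∑ⱼ zⱼ ^ l) ≤ |χ(l)| ≤ 1` forces all
`zⱼ` with `j ≠ j₀` to vanish, so `F(z) = 1 - αⱼ₀ z` and `χ(k) = -αⱼ₀ ^ k`.
-/

open Filter Topology

theorem exists_pos_pow_mem_of_mem_nhds_one {G : Type*} [Group G] [TopologicalSpace G]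
    [CompactSpace G] [IsTopologicalGroup G] (x : G) {U : Set G} (hU : U ∈ 𝓝 1) :
    ∃ n, 1 ≤ n ∧ x ^ n ∈ U :=
  ((mapClusterPt_one_atTop_pow x).frequently hU).forall_exists_of_atTop 1

namespace Complex

theorem exists_pos_pow_re_pos {ι : Type*} [Finite ι] (z : ι → ℂ) :
    ∃ l, 1 ≤ l ∧ ∀ j, z j ≠ 0 → 0 < (z j ^ l).re := by
  let u : ι → Circle := fun j => Circle.exp (z j).arg
  have hU : {v : ι → Circle | ∀ j, 0 < (v j : ℂ).re} ∈ 𝓝 1 := by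
    refine IsOpen.mem_nhds ?_ (fun j => by simp)
    simp only [Set.ofPred_forall]
    exact isOpen_iInter_of_finite fun j => isOpen_lt continuous_const (by fun_prop)
  obtain ⟨l, hl, hul⟩ := exists_pos_pow_mem_of_mem_nhds_one u hU
  refine ⟨l, hl, fun j hj => ?_⟩
  have hpolar : z j = ‖z j‖ * (u j : ℂ) := by
    rw [Circle.coe_exp, norm_mul_exp_arg_mul_I]
  have hdir : 0 < ((u j : ℂ) ^ l).re := by simpa using hul j
  rw [hpolar, mul_pow, ← ofReal_pow, re_ofReal_mul]
  exact mul_pos (pow_pos (norm_pos_iff.mpr hj) l) hdir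

theorem eq_zero_of_re_pos_of_norm_sum_le_one {ι : Type*} [Fintype ι] {z : ι → ℂ}
    (hz : ∀ j, z j ≠ 0 → 0 < (z j).re) {j₀ : ι} (hj₀ : z j₀ = 1) (hsum : ‖∑ j, z j‖ ≤ 1)
    {j : ι} (hj : j ≠ j₀) : z j = 0 := by
  by_contra hzj
  have hre_nonneg : ∀ i ∈ Finset.univ, 0 ≤ (z i).re := fun i _ => by
    by_cases hi : z i = 0
    · simp [hi]
    · exact (hz i hi).le
  have hpair := Finset.add_le_sum hre_nonneg (Finset.mem_univ j₀) (Finset.mem_univ j) hj.symm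
  rw [← re_sum, hj₀, one_re] at hpair
  linarith [hz j hzj, re_le_norm (∑ i, z i)]

theorem eq_zero_of_norm_sum_pow_le_one {ι : Type*} [Fintype ι] {α : ι → ℂ} {j₀ : ι}
    (hj₀ : ‖α j₀‖ = 1) (hsum : ∀ l, 1 ≤ l → ‖∑ j, α j ^ l‖ ≤ 1) {j : ι} (hj : j ≠ j₀) :
    α j = 0 := by
  have hα₀ : α j₀ ≠ 0 := norm_ne_zero_iff.mp (by rw [hj₀]; exact one_ne_zero)
  obtain ⟨l, hl, hpos⟩ := exists_pos_pow_re_pos fun i => α i / α j₀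
  have hsum_div : ‖∑ i, (α i / α j₀) ^ l‖ ≤ 1 := by
    simp_rw [div_pow, ← Finset.sum_div, norm_div, norm_pow, hj₀, one_pow, div_one]
    exact hsum l hl
  have hpow := eq_zero_of_re_pos_of_norm_sum_le_one (z := fun i => (α i / α j₀) ^ l)
    (fun i hi => hpos i (ne_zero_pow (by omega) hi)) (by simp [div_self hα₀]) hsum_div hj
  exact (div_eq_zero_iff.mp (eq_zero_of_pow_eq_zero hpow)).resolve_right hα₀

theorem exists_exp_two_pi_mul_I_eq {β : ℂ} (hβ : ‖β‖ = 1) :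
    ∃ θ : ℝ, exp (2 * Real.pi * I * θ) = β := by
  obtain ⟨t, rfl⟩ := (norm_eq_one_iff β).mp hβ
  refine ⟨t / (2 * Real.pi), congrArg exp ?_⟩
  push_cast
  field_simp

end Complex

theorem stmt_13_general (χ : ℕ → ℂ) (hχ : ∀ k : ℕ, 1 ≤ k → ‖χ k‖ ≤ 1)
    (σ : ℕ → ℂ) (K : ℕ) (K' : ℕ) (α : Fin K' → ℂ)
    (hfac : ∀ z : ℂ, ∑ i ∈ Finset.range (K + 1), σ i * z ^ i = ∏ j, (1 - α j * z))
    (hχα : ∀ l : ℕ, 1 ≤ l → χ l = -∑ j, α j ^ l)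
    (hone : ∃ j, ‖α j‖ = 1) :
    ∃ θ : ℝ, (∀ z : ℂ, ∑ i ∈ Finset.range (K + 1), σ i * z ^ i =
        1 - Complex.exp (2 * Real.pi * Complex.I * θ) * z) ∧
      ∀ k : ℕ, 1 ≤ k → χ k = -Complex.exp (2 * Real.pi * Complex.I * θ) ^ k := by
  obtain ⟨j₀, hj₀⟩ := hone
  have hvanish : ∀ j, j ≠ j₀ → α j = 0 := fun j =>
    Complex.eq_zero_of_norm_sum_pow_le_one hj₀ fun l hl => by
      simpa [hχα l hl] using hχ l hl
  obtain ⟨θ, hθ⟩ := Complex.exists_exp_two_pi_mul_I_eq hj₀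
  refine ⟨θ, fun z => ?_, fun k hk => ?_⟩
  · rw [hfac, hθ, Finset.prod_eq_single j₀ (fun j _ hj => by simp [hvanish j hj]) (by simp)]
  · rw [hχα k hk, hθ,
      Finset.sum_eq_single j₀ (fun j _ hj => by rw [hvanish j hj, zero_pow (by omega)]) (by simp)]

theorem stmt_13 (χ : ℕ → ℂ) (hχ : ∀ k : ℕ, 1 ≤ k → ‖χ k‖ ≤ 1)
    (σ : ℕ → ℂ) (hσ0 : σ 0 = 1)
    (hrec : ∀ n : ℕ, 1 ≤ n → (n : ℂ) * σ n = ∑ k ∈ Finset.Icc 1 n, χ k * σ (n - k))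
    (K : ℕ) (hvan : ∀ n : ℕ, K + 1 ≤ n → σ n = 0)
    (K' : ℕ) (α : Fin K' → ℂ) (hα : ∀ j, ‖α j‖ ≤ 1)
    (hfac : ∀ z : ℂ, ∑ i ∈ Finset.range (K + 1), σ i * z ^ i = ∏ j, (1 - α j * z))
    (hχα : ∀ l : ℕ, 1 ≤ l → χ l = -∑ j, α j ^ l)
    (hone : ∃ j, ‖α j‖ = 1) :
    ∃ θ : ℝ, (∀ z : ℂ, ∑ i ∈ Finset.range (K + 1), σ i * z ^ i =
        1 - Complex.exp (2 * Real.pi * Complex.I * θ) * z) ∧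
      ∀ k : ℕ, 1 ≤ k → χ k = -Complex.exp (2 * Real.pi * Complex.I * θ) ^ k :=
  stmt_13_general χ hχ σ K K' α hfac hχα hone
end

section
/- For every integer m >= 1, c_m := (1/m) sum_{a=0}^{m-1} |cos(pi a/m)| satisfies c_m = (2/pi)·(1 - 2·sum_{r >= 1, m | r} (-1)^r / (4 r^2 - 1)). -/
/-!
On `ℝ / πℤ`, `|cos x| = ∑ₙ aₙ e^{2inx}` with `aₙ = 2 (-1)ⁿ / (π (1 - 4n²))`, an absolutely
summable Fourier series. Averaging it over the `m` equally spaced points `πa/m` kills every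
frequency not divisible by `m` (its contribution is a sum over the `m`-th roots of unity), so
`c_m = ∑_{k ∈ ℤ} a_{mk}`, which is `a₀ + 2 ∑_{s ≥ 1} a_{ms}` because `a` is even.
-/

open Complex Real

noncomputable section

theorem integral_exp_ofReal_mul_mul_I (t b : ℝ) (ht : t ≠ 0) :
    ∫ x in -b..b, cexp (↑(t * x) * I) = 2 * Real.sin (t * b) / t := by
  rw [intervalIntegral.integral_comp_mul_left (fun x : ℝ => cexp (x * I)) ht, mul_neg,
    integral_exp_mul_I_eq_sin, Complex.real_smul]
  push_cast
  field_simp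

theorem sum_fourier_coe_mul_div {T : ℝ} [Fact (0 < T)] {m : ℕ} (hm : m ≠ 0) (n : ℤ) :
    ∑ a ∈ Finset.range m, fourier n ((T * a / m : ℝ) : AddCircle T) =
      if (m : ℤ) ∣ n then (m : ℂ) else 0 := by
  have hζ := Complex.isPrimitiveRoot_exp m hm
  set ζ := cexp (2 * π * I / m)
  have hT : (T : ℂ) ≠ 0 := by exact_mod_cast (Fact.out : 0 < T).ne'
  have hpow (a : ℕ) : fourier n ((T * a / m : ℝ) : AddCircle T) = (ζ ^ n) ^ a := by
    rw [fourier_coe_apply, ← Complex.exp_int_mul, ← Complex.exp_nat_mul]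
    congr 1
    push_cast
    field_simp
  simp only [hpow]
  split_ifs with hdvd
  · simp [(hζ.zpow_eq_one_iff_dvd n).2 hdvd]
  · rw [geom_sum_eq (mt (hζ.zpow_eq_one_iff_dvd n).1 hdvd), ← zpow_natCast, ← zpow_mul,
      mul_comm, zpow_mul, zpow_natCast, hζ.pow_eq_one, one_zpow, sub_self, zero_div]

theorem hasSum_fourierCoeff_mul_of_summable {T : ℝ} [Fact (0 < T)] {f : C(AddCircle T, ℂ)}
    (hf : Summable (fourierCoeff f)) {m : ℕ} (hm : m ≠ 0) :
    HasSum (fun k : ℤ => (m : ℂ) * fourierCoeff f (m * k))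
      (∑ a ∈ Finset.range m, f ((T * a / m : ℝ) : AddCircle T)) := by
  have h := hasSum_sum fun a (_ : a ∈ Finset.range m) =>
    has_pointwise_sum_fourier_series_of_summable hf ((T * a / m : ℝ) : AddCircle T)
  simp only [smul_eq_mul, ← Finset.mul_sum, sum_fourier_coe_mul_div hm, mul_ite, mul_zero] at h
  rw [← (mul_right_injective₀ (by exact_mod_cast hm : (m : ℤ) ≠ 0)).hasSum_iff] at h
  · exact h.congr_fun fun k => by simp [mul_comm]
  · intro n hn
    rw [if_neg fun ⟨k, hk⟩ => hn ⟨k, hk.symm⟩]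

instance : Fact (0 < π) := ⟨pi_pos⟩

def absCos : C(AddCircle π, ℂ) :=
  ⟨Function.Periodic.lift (f := fun x : ℝ => ((|Real.cos x| : ℝ) : ℂ))
    (fun x => by simp [Real.cos_add_pi]), continuous_quot_lift _ (by fun_prop)⟩

theorem absCos_coe (x : ℝ) : absCos x = |Real.cos x| := rfl

def absCosCoeff (n : ℤ) : ℝ := 2 / π * (-1) ^ n / (1 - 4 * n ^ 2)

theorem absCosCoeff_neg (n : ℤ) : absCosCoeff (-n) = absCosCoeff n := by
  rw [absCosCoeff, absCosCoeff, zpow_neg, ← inv_zpow, inv_neg_one, Int.cast_neg, neg_sq]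

theorem absCosCoeff_natCast (k : ℕ) :
    absCosCoeff k = -(2 / π) * ((-1) ^ k / (4 * (k : ℝ) ^ 2 - 1)) := by
  rw [absCosCoeff, zpow_natCast, Int.cast_natCast, ← neg_sub (4 * _), div_neg]
  ring

theorem summable_absCosCoeff : Summable absCosCoeff := by
  refine Summable.of_norm_bounded_eventually
    ((summable_one_div_int_pow.2 one_lt_two).mul_left (2 / π)) ?_
  filter_upwards [Filter.eventually_cofinite_ne 0] with n hn
  have hn2 : (1 : ℝ) ≤ n ^ 2 := by
    have : 1 ≤ |n| := Int.one_le_abs hn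
    have : (1 : ℤ) ≤ n ^ 2 := by nlinarith [sq_abs n]
    exact_mod_cast this
  rw [absCosCoeff, Real.norm_eq_abs, abs_div, abs_mul, abs_neg_one_zpow, mul_one,
    abs_of_pos (by positivity), abs_of_neg (by linarith), mul_one_div]
  gcongr
  linarith

theorem fourierCoeff_absCos (n : ℤ) : fourierCoeff absCos n = absCosCoeff n := by
  have h₁ : (1 - 2 * n : ℝ) ≠ 0 := by
    have : (1 - 2 * n : ℤ) ≠ 0 := by omega
    exact_mod_cast this
  have h₂ : (-1 - 2 * n : ℝ) ≠ 0 := by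
    have : (-1 - 2 * n : ℤ) ≠ 0 := by omega
    exact_mod_cast this
  have hsin₁ : Real.sin ((1 - 2 * n) * (π / 2)) = (-1) ^ n := by
    rw [show (1 - 2 * (n : ℝ)) * (π / 2) = π / 2 - n * π by ring, Real.sin_pi_div_two_sub,
      Real.cos_int_mul_pi]
  have hsin₂ : Real.sin ((-1 - 2 * n) * (π / 2)) = -(-1) ^ n := by
    rw [show (-1 - 2 * (n : ℝ)) * (π / 2) = -(π / 2 + n * π) by ring, Real.sin_neg,
      Real.sin_add_int_mul_pi, Real.sin_pi_div_two, mul_one]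
  -- on `[-π/2, π/2]`, `|cos x| = cos x = (e^{ix} + e^{-ix}) / 2`
  have hintegrand : Set.EqOn (fun x : ℝ => fourier (-n) (x : AddCircle π) • absCos x)
      (fun x => (cexp (↑((1 - 2 * n) * x) * I) + cexp (↑((-1 - 2 * n) * x) * I)) / 2)
      (Set.uIcc (-(π / 2)) (π / 2)) := by
    intro x hx
    rw [Set.uIcc_of_le (by linarith [pi_pos])] at hx
    simp only [absCos_coe, abs_of_nonneg (Real.cos_nonneg_of_mem_Icc hx), fourier_coe_apply,
      smul_eq_mul, Complex.ofReal_cos, Complex.cos, mul_div_assoc', mul_add, ← Complex.exp_add]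
    congr 3 <;> push_cast <;> field_simp <;> ring
  rw [fourierCoeff_eq_intervalIntegral _ n (-(π / 2)), show -(π / 2) + π = π / 2 by ring,
    intervalIntegral.integral_congr hintegrand, intervalIntegral.integral_div,
    intervalIntegral.integral_add (Continuous.intervalIntegrable (by fun_prop) _ _)
      (Continuous.intervalIntegrable (by fun_prop) _ _),
    integral_exp_ofReal_mul_mul_I _ _ h₁, integral_exp_ofReal_mul_mul_I _ _ h₂]
  have key : 1 / π * ((2 * Real.sin ((1 - 2 * n) * (π / 2)) / (1 - 2 * n) +
      2 * Real.sin ((-1 - 2 * n) * (π / 2)) / (-1 - 2 * n)) / 2) = absCosCoeff n := by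
    rw [absCosCoeff, hsin₁, hsin₂,
      show (1 - 4 * n ^ 2 : ℝ) = -((1 - 2 * n) * (-1 - 2 * n)) by ring]
    field_simp
    ring
  rw [Complex.real_smul]
  exact_mod_cast key

theorem hasSum_absCosCoeff_mul (m : ℕ) {S : ℝ}
    (hS : HasSum (fun s : ℕ =>
      (-1 : ℝ) ^ ((s + 1) * m) / (4 * (((s + 1) * m : ℕ) : ℝ) ^ 2 - 1)) S) :
    HasSum (fun k : ℤ => absCosCoeff (m * k)) (2 / π * (1 - 2 * S)) := by
  have hpos : HasSum (fun s : ℕ => absCosCoeff (m * (s + 1))) (-(2 / π) * S) := by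
    refine (hS.mul_left _).congr_fun fun s => ?_
    rw [show (m : ℤ) * (s + 1) = ((s + 1) * m : ℕ) by push_cast; ring, absCosCoeff_natCast]
  have hneg : HasSum (fun s : ℕ => absCosCoeff (m * -(s + 1))) (-(2 / π) * S) :=
    hpos.congr_fun fun s => by rw [mul_neg, absCosCoeff_neg]
  convert HasSum.of_add_one_of_neg_add_one (f := fun k : ℤ => absCosCoeff (m * k)) hpos hneg
    using 1
  rw [mul_zero, absCosCoeff, zpow_zero, Int.cast_zero]
  ring

end

theorem stmt_16 (m : ℕ) (hm : 1 ≤ m) (S : ℝ)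
    (hS : HasSum (fun s : ℕ =>
      (-1 : ℝ) ^ ((s + 1) * m) / (4 * (((s + 1) * m : ℕ) : ℝ) ^ 2 - 1)) S) :
    (1 / (m : ℝ)) * ∑ a ∈ Finset.range m, |Real.cos (Real.pi * a / m)| =
      (2 / Real.pi) * (1 - 2 * S) := by
  have hm₀ : m ≠ 0 := Nat.one_le_iff_ne_zero.1 hm
  have hsummable : Summable (fourierCoeff absCos) :=
    (Complex.summable_ofReal.2 summable_absCosCoeff).congr fun n => (fourierCoeff_absCos n).symm
  have hsample := hasSum_fourierCoeff_mul_of_summable hsummable hm₀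
  simp only [fourierCoeff_absCos, absCos_coe] at hsample
  have hsample' : HasSum (fun k : ℤ => (m : ℝ) * absCosCoeff (m * k))
      (∑ a ∈ Finset.range m, |Real.cos (π * a / m)|) := by
    exact_mod_cast hsample
  rw [hsample'.unique ((hasSum_absCosCoeff_mul m hS).mul_left (m : ℝ))]
  field_simp
end
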